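/- Let R be a ring, n a non-negative integer, and {M_i}_{i∈I} a family of left R-modules. The direct sum ⊕_{i∈I} M_i is n-weak injective if and only if each M_i is n-weak injective. -/

import Mathlib

/-! Definitions for `n`-weak injective and `n`-weak flat modules over an arbitrary
(associative, unital, possibly noncommutative) ring `R`, following
Amini–Amzil–Bennis, "On n-weak injective and n-weak flat modules".

Left `R`-modules are types with `[Module R M]`; right `R`-modules are types with
`[Module Rᵐᵒᵖ M]`.  `Ext` is the derived functor of the ℤ-linear Yoneda functor on
`ModuleCat R`, and `Tor` is obtained as the left derived functor of the balanced
tensor product `N ⊗_R -` (constructed as a quotient of the ℤ-tensor product). -/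

open CategoryTheory Limits TensorProduct

noncomputable section

universe u

namespace NWeak

variable (R : Type u) [Ring R]

/-- A left `R`-module `U` is *`n`-super finitely presented* if it admits a resolution
`⋯ → F_{n+1} → F_n → ⋯ → F_1 → F_0 → U → 0` by projective modules in which `F_i` is
finitely generated for every `i ≥ n`. -/
def IsNSuperFP (n : ℕ) (U : Type u) [AddCommGroup U] [Module R U] : Prop :=
  ∃ (F : ℕ → ModuleCat.{u} R) (d : ∀ i, F (i + 1) ⟶ F i) (ε : F 0 →ₗ[R] U),
    (∀ i, Module.Projective R (F i)) ∧
    (∀ i, n ≤ i → Module.Finite R (F i)) ∧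
    Function.Surjective ε ∧
    Function.Exact (d 0) ε ∧
    (∀ i, Function.Exact (d (i + 1)) (d i))

/-- A left `R`-module `K` is *special super finitely presented* (relative to `n`) if
there are an `n`-super finitely presented module `U` and a resolution
`⋯ → F_{n+1} → F_n → ⋯ → F_0 → U → 0` as above such that `K ≅ Im (F_n → F_{n-1})`,
where for `n = 0` we read `K_{-1} := U`. -/
def IsSpecialSFP (n : ℕ) (K : Type u) [AddCommGroup K] [Module R K] : Prop :=
  ∃ (F : ℕ → ModuleCat.{u} R) (d : ∀ i, F (i + 1) ⟶ F i) (U : ModuleCat.{u} R)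
    (ε : F 0 ⟶ U),
    (∀ i, Module.Projective R (F i)) ∧
    (∀ i, n ≤ i → Module.Finite R (F i)) ∧
    Function.Surjective ε ∧
    Function.Exact (d 0) ε ∧
    (∀ i, Function.Exact (d (i + 1)) (d i)) ∧
    (match n with
      | 0 => Nonempty (K ≃ₗ[R] U)
      | m + 1 => Nonempty (K ≃ₗ[R] LinearMap.range (d m).hom))

/-- Vanishing of `Ext_R^i(K, M)` for left `R`-modules. -/
def extVanish (i : ℕ) (K : Type u) [AddCommGroup K] [Module R K]
    (M : Type u) [AddCommGroup M] [Module R M] : Prop :=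
  Subsingleton (((Ext ℤ (ModuleCat.{u} R) i).obj
    (Opposite.op (ModuleCat.of R K))).obj (ModuleCat.of R M))

/-- A left `R`-module `M` is *`n`-weak injective* if `Ext_R^{n+1}(U, M) = 0` for every
`n`-super finitely presented left `R`-module `U`. -/
def IsNWeakInjective (n : ℕ) (M : Type u) [AddCommGroup M] [Module R M] : Prop :=
  ∀ (U : ModuleCat.{u} R), IsNSuperFP R n U → extVanish R (n + 1) U M

/-- The left `R`-module `M` has *`n`-weak injective dimension at most `k`* if
`Ext_R^{k+1}(K, M) = 0` for every special super finitely presented left `R`-module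
`K`. -/
def WIDimLE (n k : ℕ) (M : Type u) [AddCommGroup M] [Module R M] : Prop :=
  ∀ (K : ModuleCat.{u} R), IsSpecialSFP R n K → extVanish R (k + 1) K M

/-! ### The balanced tensor product and Tor -/

/-- The additive subgroup of `N ⊗[ℤ] K` generated by the balancing relations
`(n·r) ⊗ k - n ⊗ (r·k)`. -/
def balRel (N : Type u) [AddCommGroup N] [Module Rᵐᵒᵖ N]
    (K : Type u) [AddCommGroup K] [Module R K] : AddSubgroup (N ⊗[ℤ] K) :=
  AddSubgroup.closure
    {x | ∃ (a : N) (r : R) (b : K),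
      x = (MulOpposite.op r • a) ⊗ₜ[ℤ] b - a ⊗ₜ[ℤ] (r • b)}

/-- The balanced tensor product `N ⊗_R K` of a right `R`-module `N` and a left
`R`-module `K`, realized as a quotient of `N ⊗[ℤ] K`. -/
def RTensor (N : Type u) [AddCommGroup N] [Module Rᵐᵒᵖ N]
    (K : Type u) [AddCommGroup K] [Module R K] : Type u :=
  (N ⊗[ℤ] K) ⧸ balRel R N K

instance (N : Type u) [AddCommGroup N] [Module Rᵐᵒᵖ N]
    (K : Type u) [AddCommGroup K] [Module R K] : AddCommGroup (RTensor R N K) :=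
  inferInstanceAs (AddCommGroup ((N ⊗[ℤ] K) ⧸ balRel R N K))

variable {R}

/-- Functoriality of the balanced tensor product in the left-module variable. -/
def balMapRight (N : Type u) [AddCommGroup N] [Module Rᵐᵒᵖ N]
    {K K' : Type u} [AddCommGroup K] [Module R K] [AddCommGroup K'] [Module R K']
    (f : K →ₗ[R] K') : RTensor R N K →+ RTensor R N K' :=
  QuotientAddGroup.map _ _
    (TensorProduct.map (LinearMap.id : N →ₗ[ℤ] N) (f.restrictScalars ℤ)).toAddMonoidHom
    (by
      rw [balRel, AddSubgroup.closure_le]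
      rintro x ⟨a, r, b, rfl⟩
      simp only [SetLike.mem_coe, AddSubgroup.mem_comap, LinearMap.toAddMonoidHom_coe,
        map_sub, TensorProduct.map_tmul, LinearMap.coe_restrictScalars, LinearMap.id_coe,
        id_eq, LinearMap.map_smul]
      exact AddSubgroup.subset_closure ⟨a, r, f b, rfl⟩)

/-- Functoriality of the balanced tensor product in the right-module variable. -/
def balMapLeft (K : Type u) [AddCommGroup K] [Module R K]
    {N N' : Type u} [AddCommGroup N] [Module Rᵐᵒᵖ N] [AddCommGroup N'] [Module Rᵐᵒᵖ N']
    (g : N →ₗ[Rᵐᵒᵖ] N') : RTensor R N K →+ RTensor R N' K :=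
  QuotientAddGroup.map _ _
    (TensorProduct.map (g.restrictScalars ℤ) (LinearMap.id : K →ₗ[ℤ] K)).toAddMonoidHom
    (by
      rw [balRel, AddSubgroup.closure_le]
      rintro x ⟨a, r, b, rfl⟩
      simp only [SetLike.mem_coe, AddSubgroup.mem_comap, LinearMap.toAddMonoidHom_coe,
        map_sub, TensorProduct.map_tmul, LinearMap.coe_restrictScalars, LinearMap.id_coe,
        id_eq, LinearMap.map_smul]
      exact AddSubgroup.subset_closure ⟨g a, r, b, rfl⟩)

lemma balMapRight_mk (N : Type u) [AddCommGroup N] [Module Rᵐᵒᵖ N]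
    {K K' : Type u} [AddCommGroup K] [Module R K] [AddCommGroup K'] [Module R K']
    (f : K →ₗ[R] K') (y : N ⊗[ℤ] K) :
    balMapRight N f (QuotientAddGroup.mk y)
      = QuotientAddGroup.mk (TensorProduct.map (LinearMap.id : N →ₗ[ℤ] N)
          (f.restrictScalars ℤ) y) := rfl

variable (R)

/-- The functor `K ↦ N ⊗_R K` from left `R`-modules to abelian groups, for a fixed
right `R`-module `N`. -/
def tensorFunctor (N : Type u) [AddCommGroup N] [Module Rᵐᵒᵖ N] :
    ModuleCat.{u} R ⥤ AddCommGrpCat.{u} where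
  obj K := AddCommGrpCat.of (RTensor R N K)
  map {K K'} f := AddCommGrpCat.ofHom (balMapRight N f.hom)
  map_id K := by
    refine AddCommGrpCat.ext fun x => ?_
    refine QuotientAddGroup.induction_on x fun y => ?_
    show balMapRight N (LinearMap.id) (QuotientAddGroup.mk y) = QuotientAddGroup.mk y
    rw [balMapRight_mk]
    congr 1
    refine TensorProduct.induction_on y (by simp) (fun a b => by simp) ?_
    intro s t hs ht
    simp_all [map_add]
  map_comp {K K' K''} f g := by
    refine AddCommGrpCat.ext fun x => ?_
    refine QuotientAddGroup.induction_on x fun y => ?_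
    show balMapRight N (g.hom.comp f.hom) (QuotientAddGroup.mk y)
      = balMapRight N g.hom (balMapRight N f.hom (QuotientAddGroup.mk y))
    rw [balMapRight_mk, balMapRight_mk, balMapRight_mk]
    congr 1
    refine TensorProduct.induction_on y (by simp) (fun a b => by simp) ?_
    intro s t hs ht
    simp_all [map_add]

instance (N : Type u) [AddCommGroup N] [Module Rᵐᵒᵖ N] : (tensorFunctor R N).Additive where
  map_add {K K'} {f g} := by
    refine AddCommGrpCat.ext fun x => ?_
    refine QuotientAddGroup.induction_on x fun y => ?_
    show balMapRight N (f + g).hom (QuotientAddGroup.mk y)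
      = balMapRight N f.hom (QuotientAddGroup.mk y) + balMapRight N g.hom (QuotientAddGroup.mk y)
    rw [balMapRight_mk, balMapRight_mk, balMapRight_mk]
    erw [← QuotientAddGroup.mk_add]
    congr 1
    refine TensorProduct.induction_on y (by simp)
      (fun a b => by
        simp only [TensorProduct.map_tmul, LinearMap.coe_restrictScalars, LinearMap.id_coe, id_eq]
        rw [show (f + g) b = f b + g b from rfl, TensorProduct.tmul_add]) ?_
    intro s t hs ht
    simp_all [map_add]
    abel

/-- Vanishing of `Tor_i^R(N, K)` for a right `R`-module `N` and a left `R`-module `K`: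
the `i`-th left derived functor of `N ⊗_R -` vanishes at `K`. -/
def torVanish (i : ℕ) (N : Type u) [AddCommGroup N] [Module Rᵐᵒᵖ N]
    (K : Type u) [AddCommGroup K] [Module R K] : Prop :=
  Subsingleton (((tensorFunctor R N).leftDerived i).obj (ModuleCat.of R K))

/-- A right `R`-module `N` is *`n`-weak flat* if `Tor^R_{n+1}(N, U) = 0` for every
`n`-super finitely presented left `R`-module `U`. -/
def IsNWeakFlat (n : ℕ) (N : Type u) [AddCommGroup N] [Module Rᵐᵒᵖ N] : Prop :=
  ∀ (U : ModuleCat.{u} R), IsNSuperFP R n U → torVanish R (n + 1) N U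

/-- The right `R`-module `N` has *`n`-weak flat dimension at most `k`* if
`Tor^R_{k+1}(N, K) = 0` for every special super finitely presented left `R`-module
`K`. -/
def WFDimLE (n k : ℕ) (N : Type u) [AddCommGroup N] [Module Rᵐᵒᵖ N] : Prop :=
  ∀ (K : ModuleCat.{u} R), IsSpecialSFP R n K → torVanish R (k + 1) N K

/-! ### Character modules -/

/-- The character module `M⋆ = Hom_ℤ(M, ℚ/ℤ)` of a left `R`-module is a right
`R`-module via `(f · r) (m) = f (r · m)`. -/
instance charModuleRight (M : Type u) [AddCommGroup M] [Module R M] :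
    Module Rᵐᵒᵖ (CharacterModule M) where
  smul ρ f := f.comp (DistribMulAction.toAddMonoidHom M ρ.unop)
  one_smul f := CharacterModule.ext _ fun m => congrArg f (one_smul R m)
  mul_smul ρ σ f := CharacterModule.ext _ fun m => congrArg f (mul_smul σ.unop ρ.unop m)
  smul_zero ρ := CharacterModule.ext _ fun _ => rfl
  smul_add ρ f g := CharacterModule.ext _ fun _ => rfl
  add_smul ρ σ f := CharacterModule.ext _ fun m => by
    show f ((ρ.unop + σ.unop) • m) = f (ρ.unop • m) + f (σ.unop • m)
    rw [add_smul, map_add]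
  zero_smul f := CharacterModule.ext _ fun m => by
    show f ((0 : R) • m) = 0
    rw [zero_smul, map_zero]

/-- The character module `N⋆ = Hom_ℤ(N, ℚ/ℤ)` of a right `R`-module is a left
`R`-module via `(r · f) (m) = f (m · r)`. -/
instance charModuleLeft (N : Type u) [AddCommGroup N] [Module Rᵐᵒᵖ N] :
    Module R (CharacterModule N) where
  smul r f := f.comp (DistribMulAction.toAddMonoidHom N (MulOpposite.op r))
  one_smul f := CharacterModule.ext _ fun m => congrArg f (one_smul Rᵐᵒᵖ m)
  mul_smul r s f := CharacterModule.ext _ fun m => congrArg f (by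
    show (MulOpposite.op (r * s)) • m = (MulOpposite.op s) • (MulOpposite.op r) • m
    rw [← mul_smul, MulOpposite.op_mul])
  smul_zero r := CharacterModule.ext _ fun _ => rfl
  smul_add r f g := CharacterModule.ext _ fun _ => rfl
  add_smul r s f := CharacterModule.ext _ fun m => by
    show f ((MulOpposite.op r + MulOpposite.op s) • m)
      = f ((MulOpposite.op r) • m) + f ((MulOpposite.op s) • m)
    rw [add_smul, map_add]
  zero_smul f := CharacterModule.ext _ fun m => by
    show f ((0 : Rᵐᵒᵖ) • m) = 0
    rw [zero_smul, map_zero]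

/-! ### Purity and flatness -/

/-- A submodule `N` of a left `R`-module `M` is *pure* if for every right `R`-module
`L` the induced map `L ⊗_R N → L ⊗_R M` is injective. -/
def IsPureSubmodule (M : Type u) [AddCommGroup M] [Module R M] (N : Submodule R M) :
    Prop :=
  ∀ (L : Type u) [AddCommGroup L] [Module Rᵐᵒᵖ L],
    Function.Injective (balMapRight L N.subtype)

/-- A submodule `N` of a right `R`-module `M` is *pure* if for every left `R`-module
`L` the induced map `N ⊗_R L → M ⊗_R L` is injective. -/
def IsPureSubmoduleRight (M : Type u) [AddCommGroup M] [Module Rᵐᵒᵖ M]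
    (N : Submodule Rᵐᵒᵖ M) : Prop :=
  ∀ (L : Type u) [AddCommGroup L] [Module R L],
    Function.Injective (balMapLeft L N.subtype)

/-- A left `R`-module `M` is *flat* if tensoring with `M` preserves injectivity of
maps of right `R`-modules. -/
def IsFlatLeft (M : Type u) [AddCommGroup M] [Module R M] : Prop :=
  ∀ (A B : Type u) [AddCommGroup A] [Module Rᵐᵒᵖ A] [AddCommGroup B] [Module Rᵐᵒᵖ B]
    (g : A →ₗ[Rᵐᵒᵖ] B), Function.Injective g → Function.Injective (balMapLeft M g)

/-- The left `R`-module `K` has *projective dimension at most `m`*: there is an exact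
sequence `0 → P_m → ⋯ → P_1 → P_0 → K → 0` with all `P_i` projective (encoded by a
projective resolution vanishing in degrees `> m`). -/
def ProjDimLE (K : Type u) [AddCommGroup K] [Module R K] (m : ℕ) : Prop :=
  ∃ (P : ℕ → ModuleCat.{u} R) (d : ∀ i, P (i + 1) ⟶ P i) (ε : P 0 →ₗ[R] K),
    (∀ i, Module.Projective R (P i)) ∧
    Function.Surjective ε ∧
    Function.Exact (d 0) ε ∧
    (∀ i, Function.Exact (d (i + 1)) (d i)) ∧
    (∀ i, m < i → Subsingleton (P i))

end NWeak

/-! Computing `Ext` with the given projective resolution `F`, the vanishing of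
`Ext^{n+1}(U, M)` says that every `f : F_{n+1} → M` vanishing on the image of `F_{n+2}`
extends along `F_{n+1} → F_n`. This extension property passes to retracts, hence from
`⨁ i, M i` to each `M i`. Conversely, `F_{n+1}` is finitely generated, so a map
`f : F_{n+1} → ⨁ i, M i` has only finitely many nonzero components, and the sum of
extensions of these components extends `f`. -/

namespace DirectSum

variable {R : Type*} [Semiring R] {ι : Type*} [DecidableEq ι] {M : ι → Type*}
  [∀ i, AddCommMonoid (M i)] [∀ i, Module R (M i)]

theorem sum_of_of_support_subset [∀ (i : ι) (x : M i), Decidable (x ≠ 0)] {x : ⨁ i, M i}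
    {S : Finset ι} (hS : x.support ⊆ S) : ∑ i ∈ S, of M i (x i) = x := by
  rw [← Finset.sum_subset hS fun i _ hi => by rw [DFinsupp.notMem_support_iff.mp hi, map_zero],
    sum_support_of]

theorem exists_finset_sum_lof_comp_component_eq {N : Type*} [AddCommMonoid N] [Module R N]
    [Module.Finite R N] (f : N →ₗ[R] ⨁ i, M i) :
    ∃ S : Finset ι, ∑ i ∈ S, lof R ι M i ∘ₗ component R ι M i ∘ₗ f = f := by
  classical
  obtain ⟨s, hs⟩ := Module.Finite.fg_top (R := R) (M := N)
  refine ⟨s.sup fun x => (f x).support, LinearMap.ext_on hs fun x hx => ?_⟩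
  simp only [LinearMap.sum_apply, LinearMap.comp_apply, lof_eq_of]
  exact sum_of_of_support_subset (Finset.le_sup (f := fun x => (f x).support) hx)

end DirectSum

namespace NWeak

open DirectSum

section CocyclesExtend

variable {R : Type*} [Semiring R] {A B C : Type*} [AddCommMonoid A] [Module R A]
  [AddCommMonoid B] [Module R B] [AddCommMonoid C] [Module R C]

/-- Exactness of `Hom_R(C, M) → Hom_R(B, M) → Hom_R(A, M)` at `Hom_R(B, M)`, apart from the
inclusion of the image in the kernel. -/
def CocyclesExtend (a : B →ₗ[R] C) (b : A →ₗ[R] B) (M : Type*) [AddCommMonoid M]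
    [Module R M] : Prop :=
  ∀ f : B →ₗ[R] M, f ∘ₗ b = 0 → ∃ g : C →ₗ[R] M, g ∘ₗ a = f

variable {a : B →ₗ[R] C} {b : A →ₗ[R] B}

theorem CocyclesExtend.of_retract {M N : Type*} [AddCommMonoid M] [Module R M]
    [AddCommMonoid N] [Module R N] (i : M →ₗ[R] N) (r : N →ₗ[R] M) (hri : r ∘ₗ i = .id)
    (h : CocyclesExtend a b N) : CocyclesExtend a b M := by
  intro f hf
  obtain ⟨g, hg⟩ := h (i ∘ₗ f) (by rw [LinearMap.comp_assoc, hf, LinearMap.comp_zero])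
  refine ⟨r ∘ₗ g, ?_⟩
  rw [LinearMap.comp_assoc, hg, ← LinearMap.comp_assoc, hri, LinearMap.id_comp]

theorem CocyclesExtend.directSum [Module.Finite R B] {ι : Type*} [DecidableEq ι]
    {M : ι → Type*} [∀ i, AddCommMonoid (M i)] [∀ i, Module R (M i)]
    (h : ∀ i, CocyclesExtend a b (M i)) : CocyclesExtend a b (⨁ i, M i) := by
  intro f hf
  obtain ⟨S, hS⟩ := exists_finset_sum_lof_comp_component_eq f
  choose g hg using fun i => h i (component R ι M i ∘ₗ f)
    (by rw [LinearMap.comp_assoc, hf, LinearMap.comp_zero])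
  refine ⟨∑ i ∈ S, lof R ι M i ∘ₗ g i, LinearMap.ext fun x => ?_⟩
  conv_rhs => rw [← hS]
  simp only [LinearMap.comp_apply, LinearMap.sum_apply, ← LinearMap.congr_fun (hg _) x]

end CocyclesExtend

variable {R : Type u} [Ring R]

section Resolution

variable {U : ModuleCat.{u} R} {F : ℕ → ModuleCat.{u} R} {d : ∀ i, F (i + 1) ⟶ F i}
  {ε : F 0 →ₗ[R] U}

theorem d_comp_d_of_exact (hex : ∀ i, Function.Exact (d (i + 1)) (d i)) (i : ℕ) :
    d (i + 1) ≫ d i = 0 :=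
  ModuleCat.hom_ext (hex i).linearMap_comp_eq_zero

theorem exactAt_succ_of_exact (hex : ∀ i, Function.Exact (d (i + 1)) (d i)) (i : ℕ) :
    (ChainComplex.of F d (d_comp_d_of_exact hex)).ExactAt (i + 1) := by
  rw [HomologicalComplex.exactAt_iff' _ (i + 1 + 1) (i + 1) i (by simp) (by simp)]
  have e : (ChainComplex.of F d (d_comp_d_of_exact hex)).sc' (i + 1 + 1) (i + 1) i ≅
      ShortComplex.mk (d (i + 1)) (d i) (d_comp_d_of_exact hex i) := by
    refine ShortComplex.isoMk (Iso.refl _) (Iso.refl _) (Iso.refl _) ?_ ?_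
    · dsimp
      exact (Category.id_comp _).trans
        ((ChainComplex.of_d F d (i + 1)).symm.trans (Category.comp_id _).symm)
    · dsimp
      exact (Category.id_comp _).trans
        ((ChainComplex.of_d F d i).symm.trans (Category.comp_id _).symm)
  exact ShortComplex.exact_of_iso e.symm
    ((ShortComplex.ShortExact.moduleCat_exact_iff_function_exact _).2 (hex i))

theorem quasiIso_toSingle₀_of_exact (hsurj : Function.Surjective ε)
    (hex0 : Function.Exact (d 0) ε) (hex : ∀ i, Function.Exact (d (i + 1)) (d i))
    (π : ChainComplex.of F d (d_comp_d_of_exact hex) ⟶ (ChainComplex.single₀ _).obj U)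
    (hπ : π.f 0 = ModuleCat.ofHom ε) : QuasiIso π := by
  refine ⟨fun i => ?_⟩
  cases i with
  | zero =>
    rw [ChainComplex.quasiIsoAt₀_iff, ShortComplex.quasiIso_iff_of_zeros' _
      ((ChainComplex.of F d (d_comp_d_of_exact hex)).shape 0 0 (by simp))
      ((HomologicalComplex.isZero_single_obj_X (ComplexShape.down ℕ) 0 U 1 (by simp)).eq_of_src
        _ _)
      (((ChainComplex.single₀ _).obj U).shape 0 0 (by simp))]
    constructor
    · let S := ShortComplex.mk (d 0) (ModuleCat.ofHom ε)
        (ModuleCat.hom_ext hex0.linearMap_comp_eq_zero)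
      refine ShortComplex.exact_of_iso (S₁ := S) ?_
        ((ShortComplex.ShortExact.moduleCat_exact_iff_function_exact S).2 hex0)
      refine ShortComplex.isoMk (Iso.refl _) (Iso.refl _) (Iso.refl _) ?_ ?_
      · dsimp
        exact (Category.id_comp _).trans
          ((ChainComplex.of_d F d 0).trans (Category.comp_id _).symm)
      · dsimp
        exact (Category.id_comp _).trans (hπ.trans (Category.comp_id _).symm)
    · show Epi (π.f 0)
      exact hπ ▸ (ModuleCat.epi_iff_surjective _).2 hsurj
  | succ i =>
    rw [quasiIsoAt_iff_exactAt' _ _ (ChainComplex.exactAt_succ_single_obj _ _)]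
    exact exactAt_succ_of_exact hex i

def projectiveResolutionOfExact (hproj : ∀ i, Module.Projective R (F i))
    (hsurj : Function.Surjective ε) (hex0 : Function.Exact (d 0) ε)
    (hex : ∀ i, Function.Exact (d (i + 1)) (d i)) : ProjectiveResolution U where
  complex := ChainComplex.of F d (d_comp_d_of_exact hex)
  projective i := (IsProjective.iff_projective _).mp (hproj i)
  π := (ChainComplex.toSingle₀Equiv _ U).symm ⟨ModuleCat.ofHom ε, by
    rw [show (ChainComplex.of F d _).d 1 0 = d 0 from ChainComplex.of_d F d 0]
    exact ModuleCat.hom_ext hex0.linearMap_comp_eq_zero⟩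
  quasiIso := quasiIso_toSingle₀_of_exact hsurj hex0 hex _
    (ChainComplex.toSingle₀Equiv_symm_apply_f_zero _ _)

end Resolution

theorem extVanish_succ_iff_cocyclesExtend {K : ModuleCat.{u} R} (P : ProjectiveResolution K)
    (n : ℕ) (M : Type u) [AddCommGroup M] [Module R M] :
    extVanish R (n + 1) K M ↔
      CocyclesExtend (P.complex.d (n + 1) n).hom (P.complex.d (n + 2) (n + 1)).hom M := by
  rw [extVanish, ((forget (ModuleCat ℤ)).mapIso
      (P.isoExt (n + 1) (ModuleCat.of R M))).toEquiv.subsingleton_congr,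
    ← ModuleCat.isZero_iff_subsingleton, ← HomologicalComplex.exactAt_iff_isZero_homology,
    HomologicalComplex.exactAt_iff' _ n (n + 1) (n + 2) (by simp) (by simp),
    ShortComplex.moduleCat_exact_iff]
  refine ⟨fun h f hf => ?_, fun h x hx => ?_⟩
  · obtain ⟨g, hg⟩ := h (ModuleCat.ofHom f) (ModuleCat.hom_ext hf)
    exact ⟨g.hom, congrArg ModuleCat.Hom.hom hg⟩
  · obtain ⟨g, hg⟩ := h x.hom (congrArg ModuleCat.Hom.hom hx)
    exact ⟨ModuleCat.ofHom g, ModuleCat.hom_ext hg⟩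

theorem IsNSuperFP.exists_extVanish_iff_cocyclesExtend {n : ℕ} {U : ModuleCat.{u} R}
    (hU : IsNSuperFP R n U) :
    ∃ (A B C : ModuleCat.{u} R) (a : B ⟶ C) (b : A ⟶ B), Module.Finite R B ∧
      ∀ (M : Type u) [AddCommGroup M] [Module R M],
        extVanish R (n + 1) U M ↔ CocyclesExtend a.hom b.hom M := by
  obtain ⟨F, d, ε, hproj, hfin, hsurj, hex0, hex⟩ := hU
  let P := projectiveResolutionOfExact hproj hsurj hex0 hex
  exact ⟨_, F (n + 1), _, _, _, hfin (n + 1) n.le_succ,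
    fun M _ _ => extVanish_succ_iff_cocyclesExtend P n M⟩

end NWeak

open NWeak DirectSum in
theorem directSum_isNWeakInjective_iff_general
    (R : Type u) [Ring R] (n : ℕ) (ι : Type u) (M : ι → Type u)
    [∀ i, AddCommGroup (M i)] [∀ i, Module R (M i)] :
    IsNWeakInjective R n (⨁ i, M i) ↔ ∀ i, IsNWeakInjective R n (M i) := by
  classical
  constructor
  · intro h i U hU
    obtain ⟨A, B, C, a, b, -, hext⟩ := hU.exists_extVanish_iff_cocyclesExtend
    exact (hext _).2 (((hext _).1 (h U hU)).of_retract (lof R ι M i) (component R ι M i)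
      (LinearMap.ext (component.lof_self R i)))
  · intro h U hU
    obtain ⟨A, B, C, a, b, _, hext⟩ := hU.exists_extVanish_iff_cocyclesExtend
    exact (hext _).2 (.directSum fun i => (hext _).1 (h i U hU))

open NWeak DirectSum in
/-- A direct sum of left `R`-modules is `n`-weak injective if and only
if each summand is `n`-weak injective. -/
theorem directSum_isNWeakInjective_iff
    (R : Type u) [Ring R] (n : ℕ) (ι : Type u) [DecidableEq ι] (M : ι → Type u)
    [∀ i, AddCommGroup (M i)] [∀ i, Module R (M i)] :
    IsNWeakInjective R n (⨁ i, M i) ↔ ∀ i, IsNWeakInjective R n (M i) :=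
  directSum_isNWeakInjective_iff_general R n ι M
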